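/- Let G be an n-sum of connected multigraphs K and H along an n-element vertex set U (n ≥ 1), and let x be a real number. Then T(G;x,1) = Σ_{A ∈ Γ(U)} T_A(K;x,1) · T(H/A;x,1). -/

import Mathlib

attribute [local instance] Classical.propDecidable

/-- A multigraph: a finite vertex type, a finite edge index type, and an endpoint
map sending each edge to an unordered pair of vertices. -/
structure Multigraph where
  V : Type
  E : Type
  [finV : Fintype V]
  [finE : Fintype E]
  ends : E → Sym2 V

attribute [instance] Multigraph.finV Multigraph.finE

namespace Multigraph

/-- Two vertices are related if some edge of `S` has them as its endpoints. -/
def rel (G : Multigraph) (S : Finset G.E) (v w : G.V) : Prop :=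
  ∃ e ∈ S, G.ends e = s(v, w)

/-- `ω(S)`: the number of connected components of the spanning subgraph `(V(G), S)`. -/
noncomputable def omega (G : Multigraph) (S : Finset G.E) : ℕ :=
  Nat.card (Quotient (Relation.EqvGen.setoid (G.rel S)))

/-- `ω(G)`: the number of connected components of `G`. -/
noncomputable def omegaG (G : Multigraph) : ℕ :=
  G.omega Finset.univ

/-- The Negami polynomial `f(G;t,x,y)`. -/
noncomputable def negami (G : Multigraph) (t x y : ℝ) : ℝ :=
  ∑ S : Finset G.E, t ^ G.omega S * x ^ S.card * y ^ (Fintype.card G.E - S.card)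

/-- The Tutte polynomial `T(G;x,y)`. -/
noncomputable def tutte (G : Multigraph) (x y : ℝ) : ℝ :=
  ∑ S : Finset G.E,
    (x - 1) ^ (G.omega S - G.omegaG) *
      (y - 1) ^ (G.omega S + S.card - Fintype.card G.V)

end Multigraph

/-- The setoid on `V` extending a setoid `A` on the subset `U`: its nontrivial
classes are exactly the blocks of `A`. -/
def extendSetoid {V : Type} (U : Set V) (A : Setoid U) : Setoid V where
  r v w := v = w ∨ ∃ (hv : v ∈ U) (hw : w ∈ U), A.r ⟨v, hv⟩ ⟨w, hw⟩
  iseqv := by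
    constructor
    · exact fun v => Or.inl rfl
    · rintro v w (rfl | ⟨hv, hw, h⟩)
      · exact Or.inl rfl
      · exact Or.inr ⟨hw, hv, A.symm h⟩
    · rintro v w z (rfl | ⟨hv, hw, h⟩) (rfl | ⟨hw', hz, h'⟩)
      · exact Or.inl rfl
      · exact Or.inr ⟨hw', hz, h'⟩
      · exact Or.inr ⟨hv, hw, h⟩
      · exact Or.inr ⟨hv, hz, A.trans h h'⟩

namespace Multigraph

/-- The contraction `K/A` of a multigraph `K` by a partition `A` of a subset `U` of
its vertices: all vertices in a common block of `A` are identified. -/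
noncomputable def contract (K : Multigraph) {U : Set K.V} (A : Setoid U) : Multigraph where
  V := Quotient (extendSetoid U A)
  E := K.E
  finV := Fintype.ofFinite _
  finE := K.finE
  ends e := (K.ends e).map (Quotient.mk (extendSetoid U A))

/-- `P(S)`: the partition of `U` in which two vertices lie in the same block iff they
lie in the same connected component of the spanning subgraph `(V(K), S)`. -/
def part (K : Multigraph) (U : Set K.V) (S : Finset K.E) : Setoid U :=
  Setoid.comap Subtype.val (Relation.EqvGen.setoid (K.rel S))

/-- The auxiliary Negami polynomial `f_A(K;t,x,y)`. -/
noncomputable def negamiAux (K : Multigraph) (U : Set K.V) (A : Setoid U) (t x y : ℝ) : ℝ :=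
  ∑ S : Finset K.E,
    if K.part U S = A then
      t ^ (K.omega S - Nat.card (Quotient A)) * x ^ S.card *
        y ^ (Fintype.card K.E - S.card)
    else 0

/-- The auxiliary Tutte polynomial `T_A(K;x,y)`. -/
noncomputable def tutteAux (K : Multigraph) (U : Set K.V) (A : Setoid U) (x y : ℝ) : ℝ :=
  ∑ S : Finset K.E,
    if K.part U S = A then
      (x - 1) ^ (K.omega S - Nat.card (Quotient A)) *
        (y - 1) ^ (K.omega S + S.card - Fintype.card K.V)
    else 0

end Multigraph

/-- The set of partitions of a finite type is finite. -/
instance setoidFinite {α : Type} [Finite α] : Finite (Setoid α) :=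
  Finite.of_injective (fun s : Setoid α => s.r) fun a b h => by
    cases a; cases b; simp only at h; subst h; rfl

noncomputable instance setoidFintype {α : Type} [Finite α] : Fintype (Setoid α) :=
  Fintype.ofFinite _

/-- The number of blocks `|A|` of a partition (setoid) `A`. -/
noncomputable def nblocks {α : Type} (A : Setoid α) : ℕ :=
  Nat.card (Quotient A)

/-- The matrix `T_n(t)` indexed by partitions of `α`, with `(A,B)`-entry
`t^{|A∧B|}` where `A∧B` is the finest common coarsening (the join `A ⊔ B`). -/
noncomputable def Tmat (α : Type) [Finite α] (t : ℝ) :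
    Matrix (Setoid α) (Setoid α) ℝ :=
  Matrix.of fun A B => t ^ nblocks (A ⊔ B)

/-- The matrix `L_n(x)` indexed by partitions of `α`, with `(A,B)`-entry
`(x-1)^{|A∧B|-1}` if `|A∧B| + n = |A| + |B|` and `0` otherwise. -/
noncomputable def Lmat (α : Type) [Finite α] (n : ℕ) (x : ℝ) :
    Matrix (Setoid α) (Setoid α) ℝ :=
  Matrix.of fun A B =>
    if nblocks (A ⊔ B) + n = nblocks A + nblocks B then
      (x - 1) ^ (nblocks (A ⊔ B) - 1)
    else 0

/-- The connectivity matrix `A_n` indexed by partitions of `α`, with `(A,B)`-entry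
`1` if `|A∧B| = 1` and `0` otherwise. -/
noncomputable def Amat (α : Type) [Finite α] :
    Matrix (Setoid α) (Setoid α) ℝ :=
  Matrix.of fun A B => if nblocks (A ⊔ B) = 1 then (1 : ℝ) else 0

/-- `G` is an `n`-sum of `K` and `H` along `U`: `V(G) = V(K) ∪ V(H)`,
`V(K) ∩ V(H) = U`, and `E(G)` is the disjoint union of `E(K)` and `E(H)` with the
inherited endpoint maps. -/
structure NSum (G K H : Multigraph) (U : Set G.V) where
  ιK : K.V → G.V
  ιH : H.V → G.V
  injK : Function.Injective ιK
  injH : Function.Injective ιH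
  cover : Set.range ιK ∪ Set.range ιH = Set.univ
  inter : Set.range ιK ∩ Set.range ιH = U
  edgeEquiv : G.E ≃ K.E ⊕ H.E
  endsK : ∀ a, G.ends (edgeEquiv.symm (Sum.inl a)) = (K.ends a).map ιK
  endsH : ∀ a, G.ends (edgeEquiv.symm (Sum.inr a)) = (H.ends a).map ιH

namespace NSum

variable {G K H : Multigraph} {U : Set G.V}

/-- The copy of a partition `A` of `U` on the corresponding subset of `V(K)`. -/
def pullK (σ : NSum G K H U) (A : Setoid U) : Setoid (σ.ιK ⁻¹' U : Set K.V) :=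
  Setoid.comap (fun v => ⟨σ.ιK v.1, v.2⟩) A

/-- The copy of a partition `A` of `U` on the corresponding subset of `V(H)`. -/
def pullH (σ : NSum G K H U) (A : Setoid U) : Setoid (σ.ιH ⁻¹' U : Set H.V) :=
  Setoid.comap (fun v => ⟨σ.ιH v.1, v.2⟩) A

/-- The contraction `K/A` for a partition `A` of the common vertex set `U`. -/
noncomputable def contractK (σ : NSum G K H U) (A : Setoid U) : Multigraph :=
  K.contract (σ.pullK A)

/-- The contraction `H/B` for a partition `B` of the common vertex set `U`. -/
noncomputable def contractH (σ : NSum G K H U) (B : Setoid U) : Multigraph :=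
  H.contract (σ.pullH B)

end NSum

/-!
Write `S ⊆ E(G)` as `S₁ ∪ S₂` with `S₁ ⊆ E(K)`, `S₂ ⊆ E(H)`, and let `A = P(S₁)`. The components
of `(V(G), S)` are those of `(V(H/A), S₂)` together with the components of `(V(K), S₁)` avoiding
`U`, while the components of `(V(K), S₁)` meeting `U` are the `|A|` blocks of `A`; hence
`ω_G(S) + |A| = ω_K(S₁) + ω_{H/A}(S₂)`. With `|V(G)| + |U| = |V(K)| + |V(H)|`,
`|V(H/A)| + |U| = |V(H)| + |A|` and the connectivity of `G`, `K` and `H/A`, the summand of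
`T(G;x,y)` at `S` is the product of the summand of `T_A(K;x,y)` at `S₁` and that of `T(H/A;x,y)`
at `S₂`. Summing over `S₂`, then grouping the `S₁` by `P(S₁)`, gives the expansion for every `y`.
-/

open Relation

theorem Sym2.map_eq_mk_iff {α β : Type*} {f : α → β} {z : Sym2 α} {p q : β} :
    z.map f = s(p, q) ↔ ∃ a b, z = s(a, b) ∧ f a = p ∧ f b = q := by
  induction z using Sym2.ind with
  | _ a b =>
    simp only [Sym2.map_mk, Sym2.eq_iff]
    constructor
    · rintro (⟨rfl, rfl⟩ | ⟨rfl, rfl⟩)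
      · exact ⟨a, b, Or.inl ⟨rfl, rfl⟩, rfl, rfl⟩
      · exact ⟨b, a, Or.inr ⟨rfl, rfl⟩, rfl, rfl⟩
    · rintro ⟨a', b', (⟨rfl, rfl⟩ | ⟨rfl, rfl⟩), rfl, rfl⟩
      · exact Or.inl ⟨rfl, rfl⟩
      · exact Or.inr ⟨rfl, rfl⟩

theorem extendSetoid_iff {V : Type} {W : Set V} {A : Setoid W} {v w : V} :
    extendSetoid W A v w ↔ v = w ∨ ∃ (hv : v ∈ W) (hw : w ∈ W), A ⟨v, hv⟩ ⟨w, hw⟩ := Iff.rfl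

noncomputable def extendSetoidQuotientEquiv {V : Type} (W : Set V) (A : Setoid W) :
    Quotient (extendSetoid W A) ≃ ↥Wᶜ ⊕ Quotient A := by
  let f : V → ↥Wᶜ ⊕ Quotient A := fun v =>
    if h : v ∈ W then .inr (Quotient.mk _ ⟨v, h⟩) else .inl ⟨v, h⟩
  have hker : extendSetoid W A = Setoid.ker f := by
    ext v w
    by_cases hv : v ∈ W <;> by_cases hw : w ∈ W <;>
      simp [extendSetoid_iff, Setoid.ker_def, f, hv, hw, Quotient.eq] <;>
      rintro rfl <;> first | exact A.refl' _ | contradiction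
  have hf : Function.Surjective f := by
    rintro (⟨v, hv⟩ | q)
    · exact ⟨v, dif_neg hv⟩
    · obtain ⟨⟨v, hv⟩, rfl⟩ := Quotient.exists_rep q
      exact ⟨v, dif_pos hv⟩
  exact (Quotient.congrRight fun v w => by rw [hker]).trans
    (Setoid.quotientKerEquivOfSurjective f hf)

theorem one_le_card_quotient {V : Type} [Finite V] {U : Set V} (hU : U.Nonempty) (A : Setoid U) :
    1 ≤ Nat.card (Quotient A) :=
  have : Nonempty (Quotient A) := ⟨Quotient.mk _ ⟨hU.some, hU.some_mem⟩⟩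
  Nat.card_pos

namespace Multigraph

abbrev Components (M : Multigraph) (S : Finset M.E) : Type :=
  Quotient (EqvGen.setoid (M.rel S))

def Components.lift {M : Multigraph} {S : Finset M.E} {β : Type*} (f : M.V → β)
    (hf : ∀ v w, M.rel S v w → f v = f w) : M.Components S → β :=
  Quotient.lift f fun _ _ h => Setoid.ker_def.1 (Setoid.eqvGen_le (s := Setoid.ker f) hf h)

variable (M N : Multigraph)

theorem Components.mk_eq_mk_of_rel {S : Finset M.E} {v w : M.V} (h : M.rel S v w) :
    (Quotient.mk _ v : M.Components S) = Quotient.mk _ w :=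
  Quotient.sound (EqvGen.rel _ _ h)

theorem omega_eq_card (S : Finset M.E) : M.omega S = Nat.card (M.Components S) := rfl

theorem rel_union {S T : Finset M.E} {v w : M.V} :
    M.rel (S ∪ T) v w ↔ M.rel S v w ∨ M.rel T v w := by
  simp only [rel, Finset.mem_union, or_and_right, exists_or]

theorem rel_map_iff (φ : M.E ↪ N.E) (f : M.V → N.V)
    (hφ : ∀ e, N.ends (φ e) = (M.ends e).map f) (S : Finset M.E) {v w : N.V} :
    N.rel (S.map φ) v w ↔ Relation.Map (M.rel S) f f v w := by
  constructor
  · rintro ⟨_, he', h⟩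
    obtain ⟨e, he, rfl⟩ := Finset.mem_map.1 he'
    obtain ⟨a, b, hab, rfl, rfl⟩ := Sym2.map_eq_mk_iff.1 ((hφ e).symm.trans h)
    exact ⟨a, b, ⟨e, he, hab⟩, rfl, rfl⟩
  · rintro ⟨a, b, ⟨e, he, hab⟩, rfl, rfl⟩
    exact ⟨φ e, Finset.mem_map_of_mem φ he, by rw [hφ, hab, Sym2.map_mk]⟩

theorem one_le_omega [Nonempty M.V] (S : Finset M.E) : 1 ≤ M.omega S :=
  have : Nonempty (M.Components S) := ⟨Quotient.mk _ (Classical.arbitrary _)⟩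
  Nat.card_pos

theorem nonempty_of_omegaG_eq_one (hM : M.omegaG = 1) : Nonempty M.V := by
  obtain ⟨c⟩ := (Nat.card_pos_iff.1 (hM ▸ Nat.one_pos : 0 < M.omegaG)).1
  exact ⟨c.out⟩

theorem card_le_omega_empty : Fintype.card M.V ≤ M.omega ∅ := by
  rw [← Nat.card_eq_fintype_card]
  refine Nat.card_le_card_of_injective (Quotient.mk _) fun v w h => ?_
  have hbot : EqvGen.setoid (M.rel ∅) ≤ ⊥ := Setoid.eqvGen_le fun _ _ ⟨_, he, _⟩ =>
    absurd he (Finset.notMem_empty _)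
  exact hbot (Quotient.exact h)

theorem omega_le_omega_insert_add_one (S : Finset M.E) (e : M.E) :
    M.omega S ≤ M.omega (insert e S) + 1 := by
  obtain ⟨a, b, hab⟩ : ∃ a b, M.ends e = s(a, b) := ⟨_, _, (Quot.out_eq (M.ends e)).symm⟩
  let mk : M.V → M.Components S := Quotient.mk _
  -- `ρ` merges the component of `b` into that of `a`, so it respects the edges of `insert e S`
  -- and misses only the component of `b`.
  let ρ : M.Components S → M.Components S := fun c => if c = mk b then mk a else c
  have hρ : ∀ v w, M.rel (insert e S) v w → ρ (mk v) = ρ (mk w) := by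
    rintro v w ⟨e', he', hvw⟩
    rcases Finset.mem_insert.1 he' with rfl | he'
    · rw [hab, Sym2.eq_iff] at hvw
      rcases hvw with ⟨rfl, rfl⟩ | ⟨rfl, rfl⟩ <;> simp [ρ]
    · have : mk v = mk w := Components.mk_eq_mk_of_rel M ⟨e', he', hvw⟩
      rw [this]
  let R : Option (M.Components (insert e S)) → M.Components S :=
    fun o => o.elim (mk b) (Components.lift (ρ ∘ mk) hρ)
  have hR : Function.Surjective R := by
    intro c
    by_cases hc : c = mk b
    · exact ⟨none, hc.symm⟩
    · obtain ⟨v, rfl⟩ := Quotient.exists_rep c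
      exact ⟨some (Quotient.mk _ v), if_neg hc⟩
  simpa [omega_eq_card, Nat.card_eq_fintype_card, Fintype.card_option] using
    Nat.card_le_card_of_surjective R hR

theorem card_le_omega_add_card (S : Finset M.E) : Fintype.card M.V ≤ M.omega S + S.card := by
  induction S using Finset.induction_on with
  | empty => simpa using M.card_le_omega_empty
  | insert e S he ih =>
    have := M.omega_le_omega_insert_add_one S e
    rw [Finset.card_insert_of_notMem he]
    omega

def avoiding (W : Set M.V) (S : Finset M.E) : Set (M.Components S) :=
  (Set.range fun u : W => Quotient.mk _ u.1)ᶜ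

theorem omega_eq_card_part_add (W : Set M.V) (S : Finset M.E) :
    M.omega S = Nat.card (Quotient (M.part W S)) + Nat.card (M.avoiding W S) := by
  rw [omega_eq_card, part, Nat.card_congr (Setoid.comapQuotientEquiv Subtype.val _), avoiding,
    ← Nat.card_sum]
  exact (Nat.card_congr (Equiv.Set.sumCompl _)).symm

section Contract

variable {W : Set M.V} (A : Setoid W)

theorem rel_contract_iff (S : Finset M.E) {p q : (M.contract A).V} :
    (M.contract A).rel S p q ↔ Relation.Map (M.rel S) (Quotient.mk _) (Quotient.mk _) p q := by
  have := M.rel_map_iff (M.contract A) (.refl _) _ (fun _ => rfl) S (v := p) (w := q)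
  rwa [show ((M.contract A).rel (S.map (.refl M.E)) : _ → _ → Prop) = (M.contract A).rel S
    from congrArg _ Finset.map_refl] at this

theorem card_contract_V :
    Fintype.card (M.contract A).V + Nat.card W = Fintype.card M.V + Nat.card (Quotient A) := by
  have hV : Nat.card W + Nat.card ↥Wᶜ = Fintype.card M.V := by
    rw [← Nat.card_sum, Nat.card_congr (Equiv.Set.sumCompl W), Nat.card_eq_fintype_card]
  have hQ : Fintype.card (M.contract A).V = Nat.card ↥Wᶜ + Nat.card (Quotient A) := by
    rw [← Nat.card_eq_fintype_card, ← Nat.card_sum]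
    exact Nat.card_congr (extendSetoidQuotientEquiv W A)
  omega

theorem omega_contract_le (S : Finset M.E) : (M.contract A).omega S ≤ M.omega S := by
  refine Nat.card_le_card_of_surjective
    (Components.lift (fun v => Quotient.mk _ (Quotient.mk _ v)) fun v w h =>
      Components.mk_eq_mk_of_rel _ ((M.rel_contract_iff A S).2 ⟨v, w, h, rfl, rfl⟩)) fun c => ?_
  obtain ⟨p, rfl⟩ := Quotient.exists_rep c
  obtain ⟨v, rfl⟩ := Quotient.exists_rep p
  exact ⟨Quotient.mk _ v, rfl⟩

theorem omegaG_contract (hM : M.omegaG = 1) : (M.contract A).omegaG = 1 := by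
  have : Nonempty (M.contract A).V :=
    ⟨Quotient.mk _ (@Classical.arbitrary _ (M.nonempty_of_omegaG_eq_one hM))⟩
  exact le_antisymm (hM ▸ M.omega_contract_le A _) ((M.contract A).one_le_omega _)

end Contract

/-- The summand of `T(M;x,y)` and of `T_A(M;x,y)` at `S`, with `c = ω(M)` resp. `c = |A|`. -/
noncomputable def tutteTerm (M : Multigraph) (c : ℕ) (S : Finset M.E) (x y : ℝ) : ℝ :=
  (x - 1) ^ (M.omega S - c) * (y - 1) ^ (M.omega S + S.card - Fintype.card M.V)

end Multigraph

theorem sub_one_pow_mul_sub_one_pow_split (x y : ℝ) {ω a ω₁ ω₂ s s₁ s₂ v v₁ v₂ : ℕ}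
    (hω : ω + a = ω₁ + ω₂) (hs : s = s₁ + s₂) (hv : v + a = v₁ + v₂) (ha : a ≤ ω₁)
    (hω₂ : 1 ≤ ω₂) (hv₁ : v₁ ≤ ω₁ + s₁) (hv₂ : v₂ ≤ ω₂ + s₂) :
    (x - 1) ^ (ω - 1) * (y - 1) ^ (ω + s - v) =
      (x - 1) ^ (ω₁ - a) * (y - 1) ^ (ω₁ + s₁ - v₁) *
        ((x - 1) ^ (ω₂ - 1) * (y - 1) ^ (ω₂ + s₂ - v₂)) := by
  rw [show ω - 1 = (ω₁ - a) + (ω₂ - 1) by omega,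
    show ω + s - v = (ω₁ + s₁ - v₁) + (ω₂ + s₂ - v₂) by omega, pow_add, pow_add]
  ring

namespace NSum

open Multigraph

variable {G K H : Multigraph} {U : Set G.V} (σ : NSum G K H U)

theorem mem_of_ιK_eq_ιH {k : K.V} {w : H.V} (h : σ.ιK k = σ.ιH w) : σ.ιK k ∈ U :=
  (Set.ext_iff.1 σ.inter _).1 ⟨⟨k, rfl⟩, w, h.symm⟩

theorem mem_range_of_mem {u : G.V} (hu : u ∈ U) :
    u ∈ Set.range σ.ιK ∧ u ∈ Set.range σ.ιH := by
  rwa [← σ.inter] at hu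

theorem surjective_sumElim : Function.Surjective (Sum.elim σ.ιK σ.ιH) := fun v => by
  rcases (σ.cover ▸ Set.mem_univ v : v ∈ Set.range σ.ιK ∪ Set.range σ.ιH) with ⟨k, rfl⟩ | ⟨w, rfl⟩
  exacts [⟨.inl k, rfl⟩, ⟨.inr w, rfl⟩]

noncomputable def equivK : ↥(σ.ιK ⁻¹' U) ≃ U :=
  Equiv.ofBijective (fun k => ⟨σ.ιK k, k.2⟩)
    ⟨fun _ _ h => Subtype.ext (σ.injK (congrArg Subtype.val h)), fun u => by
      obtain ⟨k, hk⟩ := (σ.mem_range_of_mem u.2).1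
      exact ⟨⟨k, show σ.ιK k ∈ U from hk ▸ u.2⟩, Subtype.ext hk⟩⟩

noncomputable def equivH : ↥(σ.ιH ⁻¹' U) ≃ U :=
  Equiv.ofBijective (fun w => ⟨σ.ιH w, w.2⟩)
    ⟨fun _ _ h => Subtype.ext (σ.injH (congrArg Subtype.val h)), fun u => by
      obtain ⟨w, hw⟩ := (σ.mem_range_of_mem u.2).2
      exact ⟨⟨w, show σ.ιH w ∈ U from hw ▸ u.2⟩, Subtype.ext hw⟩⟩

noncomputable def toH (k : ↥(σ.ιK ⁻¹' U)) : H.V := (σ.equivH.symm (σ.equivK k)).1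

theorem ιH_toH (k : ↥(σ.ιK ⁻¹' U)) : σ.ιH (σ.toH k) = σ.ιK k :=
  congrArg Subtype.val (σ.equivH.apply_symm_apply _)

theorem card_quotient_pullK (A : Setoid U) :
    Nat.card (Quotient (σ.pullK A)) = Nat.card (Quotient A) :=
  Nat.card_congr (Quotient.congr σ.equivK fun _ _ => Iff.rfl)

theorem card_quotient_pullH (A : Setoid U) :
    Nat.card (Quotient (σ.pullH A)) = Nat.card (Quotient A) :=
  Nat.card_congr (Quotient.congr σ.equivH fun _ _ => Iff.rfl)

theorem card_V_add (σ : NSum G K H U) :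
    Fintype.card G.V + Nat.card U = Fintype.card K.V + Fintype.card H.V := by
  have h := Set.ncard_union_add_ncard_inter (Set.range σ.ιK) (Set.range σ.ιH)
  rw [σ.cover, σ.inter, Set.ncard_univ, Set.ncard_range_of_injective σ.injK,
    Set.ncard_range_of_injective σ.injH, ← Nat.card_coe_set_eq] at h
  simpa only [Nat.card_eq_fintype_card] using h

theorem card_contractH_V (A : Setoid U) :
    Fintype.card (σ.contractH A).V + Nat.card U = Fintype.card H.V + Nat.card (Quotient A) := by
  have h := H.card_contract_V (σ.pullH A)
  rwa [Nat.card_congr σ.equivH, σ.card_quotient_pullH] at h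

/-- The map on `V(G)` restricting to `fK` on `V(K)` and to `fH` on `V(H)`, provided these agree
on `U`. -/
noncomputable def glue {β : Type*} (fK : K.V → β) (fH : H.V → β) : G.V → β :=
  Sum.elim fK fH ∘ Function.surjInv σ.surjective_sumElim

section Glue

variable {β : Type*} {fK : K.V → β} {fH : H.V → β}

theorem glue_sumElim (hf : ∀ k w, σ.ιK k = σ.ιH w → fK k = fH w) (a : K.V ⊕ H.V) :
    σ.glue fK fH (Sum.elim σ.ιK σ.ιH a) = Sum.elim fK fH a := by
  have key : ∀ b, Sum.elim σ.ιK σ.ιH b = Sum.elim σ.ιK σ.ιH a →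
      Sum.elim fK fH b = Sum.elim fK fH a := by
    rcases a with k | w <;> rintro (k' | w') h
    exacts [congrArg fK (σ.injK h), (hf k w' h.symm).symm, hf k' w h, congrArg fH (σ.injH h)]
  exact key _ (Function.surjInv_eq σ.surjective_sumElim _)

theorem glue_ιK (hf : ∀ k w, σ.ιK k = σ.ιH w → fK k = fH w) (k : K.V) :
    σ.glue fK fH (σ.ιK k) = fK k :=
  σ.glue_sumElim hf (.inl k)

theorem glue_ιH (hf : ∀ k w, σ.ιK k = σ.ιH w → fK k = fH w) (w : H.V) :
    σ.glue fK fH (σ.ιH w) = fH w :=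
  σ.glue_sumElim hf (.inr w)

end Glue

section Edges

def edgeK : K.E ↪ G.E := Function.Embedding.inl.trans σ.edgeEquiv.symm.toEmbedding

def edgeH : H.E ↪ G.E := Function.Embedding.inr.trans σ.edgeEquiv.symm.toEmbedding

noncomputable def edges (S₁ : Finset K.E) (S₂ : Finset H.E) : Finset G.E :=
  S₁.map σ.edgeK ∪ S₂.map σ.edgeH

noncomputable def edgesEquiv : Finset K.E × Finset H.E ≃ Finset G.E :=
  Finset.sumEquiv.toEquiv.symm.trans σ.edgeEquiv.symm.finsetCongr

theorem edgesEquiv_apply (P : Finset K.E × Finset H.E) : σ.edgesEquiv P = σ.edges P.1 P.2 := by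
  ext g
  simp [edgesEquiv, edges, edgeK, edgeH, Finset.mem_disjSum, Equiv.eq_symm_apply, eq_comm]

theorem sum_edges {β : Type*} [AddCommMonoid β] (f : Finset G.E → β) :
    ∑ S, f S = ∑ S₁, ∑ S₂, f (σ.edges S₁ S₂) := by
  rw [← Fintype.sum_prod_type']
  exact (Fintype.sum_equiv σ.edgesEquiv _ _ fun P => by rw [edgesEquiv_apply]).symm

theorem card_edges (S₁ : Finset K.E) (S₂ : Finset H.E) :
    (σ.edges S₁ S₂).card = S₁.card + S₂.card := by
  rw [← σ.edgesEquiv_apply (S₁, S₂)]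
  simp [edgesEquiv, Finset.card_disjSum]

theorem edges_univ : σ.edges Finset.univ Finset.univ = Finset.univ := by
  rw [← σ.edgesEquiv_apply (_, _)]
  simp [edgesEquiv]

theorem rel_edges {S₁ : Finset K.E} {S₂ : Finset H.E} {v w : G.V} :
    G.rel (σ.edges S₁ S₂) v w ↔
      Relation.Map (K.rel S₁) σ.ιK σ.ιK v w ∨ Relation.Map (H.rel S₂) σ.ιH σ.ιH v w := by
  rw [edges, Multigraph.rel_union]
  exact or_congr (K.rel_map_iff G σ.edgeK _ σ.endsK S₁) (H.rel_map_iff G σ.edgeH _ σ.endsH S₂)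

end Edges

section Components

variable (S₁ : Finset K.E) (S₂ : Finset H.E)

/-- `P(S₁)`, transported from `σ.ιK ⁻¹' U` to `U`. -/
noncomputable def partU : Setoid U :=
  (K.part (σ.ιK ⁻¹' U) S₁).comap σ.equivK.symm

theorem partU_iff {u u' : U} {k k' : K.V} (hk : σ.ιK k = u) (hk' : σ.ιK k' = u') :
    σ.partU S₁ u u' ↔ EqvGen (K.rel S₁) k k' := by
  have e : ∀ {k : K.V} {u : U} (h : σ.ιK k = u),
      σ.equivK.symm u = ⟨k, show σ.ιK k ∈ U by rw [h]; exact u.2⟩ :=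
    fun h => σ.equivK.symm_apply_eq.2 (Subtype.ext h.symm)
  rw [partU, Setoid.comap_rel, e hk, e hk']
  rfl

theorem pullK_partU : σ.pullK (σ.partU S₁) = K.part (σ.ιK ⁻¹' U) S₁ :=
  Setoid.ext fun _ _ => σ.partU_iff S₁ rfl rfl

theorem part_eq_pullK_iff (A : Setoid U) :
    K.part (σ.ιK ⁻¹' U) S₁ = σ.pullK A ↔ A = σ.partU S₁ := by
  rw [← σ.pullK_partU, eq_comm]
  exact (Setoid.comap_injective _ σ.equivK.surjective).eq_iff

theorem card_quotient_partU :
    Nat.card (Quotient (σ.partU S₁)) = Nat.card (Quotient (K.part (σ.ιK ⁻¹' U) S₁)) := by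
  rw [← σ.pullK_partU, card_quotient_pullK]

theorem mk_eq_mk_contractH {k k' : K.V} {w w' : H.V} (hk : σ.ιK k = σ.ιH w)
    (hk' : σ.ιK k' = σ.ιH w') (h : EqvGen (K.rel S₁) k k') :
    (Quotient.mk _ w : (σ.contractH (σ.partU S₁)).V) = Quotient.mk _ w' := by
  refine Quotient.sound (Or.inr ⟨show σ.ιH w ∈ U from hk ▸ σ.mem_of_ιK_eq_ιH hk,
    show σ.ιH w' ∈ U from hk' ▸ σ.mem_of_ιK_eq_ιH hk', ?_⟩)
  exact (σ.partU_iff S₁ hk hk').2 h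

noncomputable def componentsMapK : K.Components S₁ → G.Components (σ.edges S₁ S₂) :=
  Components.lift (fun k => Quotient.mk _ (σ.ιK k)) fun k k' h =>
    Components.mk_eq_mk_of_rel _ (σ.rel_edges.2 (.inl ⟨k, k', h, rfl, rfl⟩))

noncomputable def componentsMapH :
    (σ.contractH (σ.partU S₁)).Components S₂ → G.Components (σ.edges S₁ S₂) :=
  Components.lift
    (Quotient.lift (fun w => Quotient.mk _ (σ.ιH w)) <| by
      rintro w w' (rfl | ⟨hw, hw', h⟩)
      · rfl
      obtain ⟨k, hk⟩ := (σ.mem_range_of_mem hw).1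
      obtain ⟨k', hk'⟩ := (σ.mem_range_of_mem hw').1
      rw [← hk, ← hk']
      exact congrArg (σ.componentsMapK S₁ S₂) (Quotient.sound ((σ.partU_iff S₁ hk hk').1 h)))
    fun p q h => by
      obtain ⟨w, w', hw, rfl, rfl⟩ := (H.rel_contract_iff _ S₂).1 h
      exact Components.mk_eq_mk_of_rel _ (σ.rel_edges.2 (.inr ⟨w, w', hw, rfl, rfl⟩))

noncomputable def componentsMap :
    (σ.contractH (σ.partU S₁)).Components S₂ ⊕ K.avoiding (σ.ιK ⁻¹' U) S₁ →
      G.Components (σ.edges S₁ S₂) :=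
  Sum.elim (σ.componentsMapH S₁ S₂) (σ.componentsMapK S₁ S₂ ∘ Subtype.val)

noncomputable def componentsInvK (c : K.Components S₁) :
    (σ.contractH (σ.partU S₁)).Components S₂ ⊕ K.avoiding (σ.ιK ⁻¹' U) S₁ :=
  if h : c ∈ K.avoiding _ S₁ then .inr ⟨c, h⟩
  else .inl (Quotient.mk _ (Quotient.mk _ (σ.toH (Set.notMem_compl_iff.1 h).choose)))

theorem componentsInvK_mk {k : K.V} {w : H.V} (hkw : σ.ιK k = σ.ιH w) :
    σ.componentsInvK S₁ S₂ (Quotient.mk _ k) = .inl (Quotient.mk _ (Quotient.mk _ w)) := by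
  have hc : Quotient.mk _ k ∉ K.avoiding (σ.ιK ⁻¹' U) S₁ :=
    Set.notMem_compl_iff.2 ⟨⟨k, σ.mem_of_ιK_eq_ιH hkw⟩, rfl⟩
  have hu := (Set.notMem_compl_iff.1 hc).choose_spec
  rw [componentsInvK, dif_neg hc]
  exact congrArg (Sum.inl ∘ Quotient.mk _)
    (σ.mk_eq_mk_contractH S₁ (σ.ιH_toH _).symm hkw (Quotient.exact hu))

noncomputable def componentsInv :
    G.Components (σ.edges S₁ S₂) →
      (σ.contractH (σ.partU S₁)).Components S₂ ⊕ K.avoiding (σ.ιK ⁻¹' U) S₁ :=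
  Components.lift (σ.glue (fun k => σ.componentsInvK S₁ S₂ (Quotient.mk _ k))
      fun w => .inl (Quotient.mk _ (Quotient.mk _ w))) <| by
    have hf := fun k w (h : σ.ιK k = σ.ιH w) => σ.componentsInvK_mk S₁ S₂ h
    intro v v' h
    rcases σ.rel_edges.1 h with ⟨k, k', hk, rfl, rfl⟩ | ⟨w, w', hw, rfl, rfl⟩
    · rw [σ.glue_ιK hf, σ.glue_ιK hf, Components.mk_eq_mk_of_rel _ hk]
    · rw [σ.glue_ιH hf, σ.glue_ιH hf]
      exact congrArg Sum.inl
        (Components.mk_eq_mk_of_rel _ ((H.rel_contract_iff _ S₂).2 ⟨w, w', hw, rfl, rfl⟩))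

theorem componentsInv_componentsMap :
    Function.LeftInverse (σ.componentsInv S₁ S₂) (σ.componentsMap S₁ S₂) := by
  have hf := fun k w (h : σ.ιK k = σ.ιH w) => σ.componentsInvK_mk S₁ S₂ h
  rintro (q | ⟨c, hc⟩)
  · obtain ⟨p, rfl⟩ := Quotient.exists_rep q
    obtain ⟨w, rfl⟩ := Quotient.exists_rep p
    exact σ.glue_ιH hf w
  · obtain ⟨k, rfl⟩ := Quotient.exists_rep c
    exact (σ.glue_ιK hf k).trans (dif_pos hc)

theorem componentsMap_surjective : Function.Surjective (σ.componentsMap S₁ S₂) := by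
  intro c
  obtain ⟨v, rfl⟩ := Quotient.exists_rep c
  obtain ⟨k | w, rfl⟩ := σ.surjective_sumElim v
  · by_cases hc : Quotient.mk _ k ∈ K.avoiding (σ.ιK ⁻¹' U) S₁
    · exact ⟨.inr ⟨_, hc⟩, rfl⟩
    · obtain ⟨u, hu⟩ := Set.notMem_compl_iff.1 hc
      refine ⟨.inl (Quotient.mk _ (Quotient.mk _ (σ.toH u))), ?_⟩
      change Quotient.mk _ (σ.ιH (σ.toH u)) = σ.componentsMapK S₁ S₂ (Quotient.mk _ k)
      rw [σ.ιH_toH, ← hu]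
      rfl
  · exact ⟨.inl (Quotient.mk _ (Quotient.mk _ w)), rfl⟩

theorem omega_edges_add_card :
    G.omega (σ.edges S₁ S₂) + Nat.card (Quotient (σ.partU S₁)) =
      K.omega S₁ + (σ.contractH (σ.partU S₁)).omega S₂ := by
  have hG : G.omega (σ.edges S₁ S₂) = (σ.contractH (σ.partU S₁)).omega S₂ +
      Nat.card (K.avoiding (σ.ιK ⁻¹' U) S₁) := by
    rw [omega_eq_card, ← Nat.card_congr (Equiv.ofBijective _
      ⟨(σ.componentsInv_componentsMap S₁ S₂).injective, σ.componentsMap_surjective S₁ S₂⟩),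
      Nat.card_sum]
    rfl
  rw [hG, K.omega_eq_card_part_add (σ.ιK ⁻¹' U) S₁, σ.card_quotient_partU]
  ring

end Components

theorem omegaG_eq_one (σ : NSum G K H U) (hU : U.Nonempty) (hK : K.omegaG = 1) (hH : H.omegaG = 1) :
    G.omegaG = 1 := by
  have hcount := σ.omega_edges_add_card Finset.univ Finset.univ
  rw [σ.edges_univ] at hcount
  have : Nonempty G.V := ⟨hU.some⟩
  have hG := G.one_le_omega Finset.univ
  have hA := one_le_card_quotient hU (σ.partU Finset.univ)
  have hHA : (σ.contractH (σ.partU Finset.univ)).omega (Finset.univ : Finset H.E) = 1 :=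
    H.omegaG_contract _ hH
  unfold omegaG at *
  omega

theorem tutteTerm_edges (hG : G.omegaG = 1) (hH : H.omegaG = 1)
    (S₁ : Finset K.E) (S₂ : Finset H.E) (x y : ℝ) :
    G.tutteTerm G.omegaG (σ.edges S₁ S₂) x y =
      K.tutteTerm (Nat.card (Quotient (σ.partU S₁))) S₁ x y *
        (σ.contractH (σ.partU S₁)).tutteTerm (σ.contractH (σ.partU S₁)).omegaG S₂ x y := by
  have : Nonempty (σ.contractH (σ.partU S₁)).V :=
    ⟨Quotient.mk _ (@Classical.arbitrary _ (H.nonempty_of_omegaG_eq_one hH))⟩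
  have hAK : Nat.card (Quotient (σ.partU S₁)) ≤ K.omega S₁ := by
    rw [K.omega_eq_card_part_add (σ.ιK ⁻¹' U) S₁, σ.card_quotient_partU]
    exact Nat.le_add_right _ _
  have hV := σ.card_V_add
  have hVA := σ.card_contractH_V (σ.partU S₁)
  unfold tutteTerm
  rw [hG, show (σ.contractH (σ.partU S₁)).omegaG = 1 from H.omegaG_contract _ hH]
  exact sub_one_pow_mul_sub_one_pow_split x y (σ.omega_edges_add_card S₁ S₂) (σ.card_edges S₁ S₂)
    (by omega) hAK ((σ.contractH _).one_le_omega S₂) (K.card_le_omega_add_card S₁)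
    ((σ.contractH _).card_le_omega_add_card S₂)

theorem tutteAux_pullK (A : Setoid U) (x y : ℝ) :
    K.tutteAux (σ.ιK ⁻¹' U) (σ.pullK A) x y =
      ∑ S₁, if A = σ.partU S₁ then K.tutteTerm (Nat.card (Quotient A)) S₁ x y else 0 := by
  simp only [tutteAux, part_eq_pullK_iff, card_quotient_pullK, tutteTerm]

theorem tutte_eq_sum_tutteAux_mul_tutte (hU : U.Nonempty) (hK : K.omegaG = 1)
    (hH : H.omegaG = 1) (x y : ℝ) :
    G.tutte x y = ∑ A : Setoid U,
      K.tutteAux (σ.ιK ⁻¹' U) (σ.pullK A) x y * (σ.contractH A).tutte x y := by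
  calc G.tutte x y = ∑ S₁, ∑ S₂, G.tutteTerm G.omegaG (σ.edges S₁ S₂) x y := σ.sum_edges _
    _ = ∑ S₁, K.tutteTerm (Nat.card (Quotient (σ.partU S₁))) S₁ x y *
          (σ.contractH (σ.partU S₁)).tutte x y := by
      simp only [σ.tutteTerm_edges (σ.omegaG_eq_one hU hK hH) hH, ← Finset.mul_sum]
      rfl
    _ = _ := by
      simp only [σ.tutteAux_pullK, Finset.sum_mul, ite_mul, zero_mul]
      rw [Finset.sum_comm]
      simp

end NSum

/-- `T(G;x,1) = Σ_{A ∈ Γ(U)} T_A(K;x,1) · T(H/A;x,1)` for an `n`-sum of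
connected multigraphs. -/
theorem tutte_aux_expansion
    (G K H : Multigraph) (U : Set G.V) (n : ℕ) (hn : 1 ≤ n)
    (sg : NSum G K H U) (hU : Nat.card ↥U = n)
    (hK : K.omegaG = 1) (hH : H.omegaG = 1) (x : ℝ) :
    G.tutte x 1 =
      ∑ A : Setoid ↥U,
        K.tutteAux (sg.ιK ⁻¹' U) (sg.pullK A) x 1 * (sg.contractH A).tutte x 1 := by
  have hU : U.Nonempty := Set.nonempty_coe_sort.1 (Nat.card_pos_iff.1 (by omega)).1
  exact sg.tutte_eq_sum_tutteAux_mul_tutte hU hK hH x 1
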